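/- Let β₁ = (3/2)√2 − 2. For every x₁ ∈ [0, β₁], the number h = (5 − x₁ − √(x₁² + 6x₁ + 13))/4 satisfies h ≥ x₁ and the indifference equation A(x₁,h) = C(x₁,h), i.e. 2 + 2h = min_{t∈[0,1]} G(x₁,h,t). -/
import Mathlib


/-- Expected final rank in Robbins' problem with 4 observations, first two observations
`x₁, x₂`, third accepted iff `≤ h`, fourth always accepted. -/
noncomputable def G (x₁ x₂ h : ℝ) : ℝ :=
  3/2 + h^2 - h + (2 - x₁ - x₂) * (1 - h) + max (h - x₁) 0 + max (h - x₂) 0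

/-- Optimal expected rank from rejecting the second observation:
`C x₁ x₂ = min_{t ∈ [0,1]} G x₁ x₂ t`. -/
noncomputable def C (x₁ x₂ : ℝ) : ℝ := sInf (G x₁ x₂ '' Set.Icc 0 1)

/-- Expected rank from accepting the second observation `u` given first observation `x`. -/
noncomputable def A (x u : ℝ) : ℝ := 1 + (if x ≤ u then (1:ℝ) else 0) + 2*u

set_option maxHeartbeats 1000000 in
theorem robbins_n4_h2_branch1 :
    ∀ x₁ ∈ Set.Icc (0:ℝ) ((3/2) * Real.sqrt 2 - 2), ∀ h : ℝ,
      h = (5 - x₁ - Real.sqrt (x₁^2 + 6*x₁ + 13))/4 →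
      x₁ ≤ h ∧ A x₁ h = C x₁ h ∧ 2 + 2*h = C x₁ h := by
  intro x₁ hx h hh
  have hx0 : 0 ≤ x₁ := hx.1
  have hsq2 : Real.sqrt 2 ^ 2 = 2 := Real.sq_sqrt (by norm_num)
  have hs2nn : 0 ≤ Real.sqrt 2 := Real.sqrt_nonneg 2
  have hxβ : x₁ ≤ 3/2 * Real.sqrt 2 - 2 := hx.2
  have hx13 : x₁ ≤ 13/100 := by nlinarith [sq_nonneg (Real.sqrt 2 - 142/100)]
  set s := Real.sqrt (x₁^2 + 6*x₁ + 13) with hsdef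
  have hsnn : 0 ≤ s := Real.sqrt_nonneg _
  have hs2 : s^2 = x₁^2 + 6*x₁ + 13 := Real.sq_sqrt (by nlinarith)
  -- upper bound s ≤ 5 - 5 x₁
  have hs_ub : s ≤ 5 - 5*x₁ := by
    rw [hsdef]
    calc Real.sqrt (x₁^2 + 6*x₁ + 13) ≤ Real.sqrt ((5 - 5*x₁)^2) :=
          Real.sqrt_le_sqrt (by nlinarith)
      _ = 5 - 5*x₁ := Real.sqrt_sq (by linarith)
  -- key bound from x₁ ≤ β₁ : 2x₁² + 8x₁ ≤ 1
  have hbeta : 2*x₁^2 + 8*x₁ ≤ 1 := by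
    nlinarith [mul_nonneg (sub_nonneg.2 hxβ) (show (0:ℝ) ≤ 2*(3/2*Real.sqrt 2 - 2) + 2*x₁ + 8 by nlinarith)]
  have hs_ub2 : 3*s ≤ 11 + x₁ := by
    have : s ≤ (11 + x₁)/3 := by
      rw [hsdef]
      calc Real.sqrt (x₁^2 + 6*x₁ + 13) ≤ Real.sqrt (((11 + x₁)/3)^2) :=
            Real.sqrt_le_sqrt (by nlinarith)
        _ = (11 + x₁)/3 := Real.sqrt_sq (by linarith)
    linarith
  have hs_lb1 : 1 - x₁ ≤ s := by
    have : Real.sqrt ((1 - x₁)^2) ≤ s := by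
      rw [hsdef]; exact Real.sqrt_le_sqrt (by nlinarith)
    calc 1 - x₁ = Real.sqrt ((1 - x₁)^2) := (Real.sqrt_sq (by linarith)).symm
      _ ≤ s := this
  have hs_lb2 : 7 + x₁ ≤ 3*s := by
    have h1 : Real.sqrt (((7 + x₁)/3)^2) ≤ s := by
      rw [hsdef]; exact Real.sqrt_le_sqrt (by nlinarith)
    have h2 : Real.sqrt (((7 + x₁)/3)^2) = (7 + x₁)/3 := Real.sqrt_sq (by linarith)
    linarith [h2 ▸ h1]
  -- basic facts about h
  have hxh : x₁ ≤ h := by rw [hh]; linarith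
  have hh0 : 0 ≤ h := by rw [hh]; linarith
  have hh1 : h ≤ 1 := by rw [hh]; linarith
  have hd1 : 1 ≤ 3*h + x₁ := by rw [hh]; linarith
  have hd2 : 3*h + x₁ ≤ 2 := by rw [hh]; linarith
  have hq : 2*h^2 + (x₁ - 5)*h + 3/2 - 2*x₁ = 0 := by
    rw [hh]; linear_combination hs2/8
  -- the minimum of G over [0,1]
  have hmin : ∀ t ∈ Set.Icc (0:ℝ) 1, 2 + 2*h ≤ G x₁ h t := by
    intro t ht
    obtain ⟨ht0, ht1⟩ := ht
    unfold G
    rcases le_total (t - x₁) 0 with h1 | h1 <;> rcases le_total (t - h) 0 with h2 | h2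
    · rw [max_eq_right h1, max_eq_right h2]
      nlinarith [mul_nonneg (show (0:ℝ) ≤ h - t by linarith)
        (show (0:ℝ) ≤ 2 - x₁ - 2*h - t by linarith)]
    · -- t ≤ x₁ and h ≤ t forces t = h = x₁
      have htx : t = h := le_antisymm (by linarith) (by linarith)
      subst htx
      have hxx : x₁ = t := le_antisymm hxh (by linarith)
      subst hxx
      nlinarith [hq]
    · rw [max_eq_left h1, max_eq_right h2]
      nlinarith [mul_nonneg (show (0:ℝ) ≤ h - t by linarith)
        (show (0:ℝ) ≤ 2 - x₁ - 2*h - t by linarith)]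
    · rw [max_eq_left h1, max_eq_left h2]
      nlinarith [mul_nonneg (show (0:ℝ) ≤ t - h by linarith)
        (show (0:ℝ) ≤ t + 2*h + x₁ - 1 by linarith)]
  have hGh : G x₁ h h = 2 + 2*h := by
    unfold G
    rw [max_eq_left (by linarith : (0:ℝ) ≤ h - x₁), max_eq_right (by linarith : h - h ≤ 0)]
    linear_combination hq
  have hC : C x₁ h = 2 + 2*h := by
    unfold C
    apply le_antisymm
    · apply csInf_le
      · exact ⟨2 + 2*h, by rintro y ⟨t, ht, rfl⟩; exact hmin t ht⟩
      · exact ⟨h, ⟨hh0, hh1⟩, hGh⟩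
    · apply le_csInf
      · exact ⟨G x₁ h h, Set.mem_image_of_mem _ ⟨hh0, hh1⟩⟩
      · rintro y ⟨t, ht, rfl⟩; exact hmin t ht
  refine ⟨hxh, ?_, hC.symm⟩
  unfold A
  rw [if_pos hxh, hC]
  ring
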